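/- In gl(n+1, ℝ) with n ≥ 2, let a = e_{21} − e_{12}, and for 3 ≤ α ≤ n+1 set k_α = e_{α2} − e_{2α} and p_α = e_{α1} − e_{1α}. Let u_α : ℝ → ℝ be smooth, u = Σ_α u_α k_α, ‖u‖² = Σ_α u_α², Q_2 = −(‖u‖²/2) a − Σ_α (u_α)_x p_α, and Q_3 = −Σ_α ((u_α)_{xx} + (‖u‖²/2) u_α) k_α + Σ_{α,β} (u_β (u_α)_x − u_α (u_β)_x) e_{αβ} (sums over 3 ≤ α, β ≤ n+1). Then (Q_2)_x + [u, Q_2] = [Q_3, a]. -/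

import Mathlib

open Matrix Finset
open scoped ContDiff

attribute [local instance] Matrix.frobeniusNormedAddCommGroup Matrix.frobeniusNormedSpace

/-- In `gl(n+1, ℝ)` with `n ≥ 2`, let `a = e₂₁ − e₁₂`, `k_α = e_{α2} − e_{2α}`,
`p_α = e_{α1} − e_{1α}` for `3 ≤ α ≤ n+1` (indexed here by `α : Fin (n-1)`).  For smooth
`u_α : ℝ → ℝ`, set `u = Σ_α u_α k_α`, `‖u‖² = Σ_α u_α²`,
`Q₂ = −(‖u‖²/2) a − Σ_α (u_α)_x p_α` and
`Q₃ = −Σ_α ((u_α)_xx + (‖u‖²/2) u_α) k_α + Σ_{α,β} (u_β (u_α)_x − u_α (u_β)_x) e_{αβ}`.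
Then `(Q₂)_x + [u, Q₂] = [Q₃, a]`. -/
theorem stmt_14 (n : ℕ) (hn : 2 ≤ n)
    (a : Matrix (Fin (n + 1)) (Fin (n + 1)) ℝ)
    (ha : a = Matrix.single ⟨1, by omega⟩ ⟨0, by omega⟩ 1
      - Matrix.single ⟨0, by omega⟩ ⟨1, by omega⟩ 1)
    (kmat pmat : Fin (n - 1) → Matrix (Fin (n + 1)) (Fin (n + 1)) ℝ)
    (hkmat : ∀ α : Fin (n - 1), kmat α
      = Matrix.single ⟨(α : ℕ) + 2, by have := α.isLt; omega⟩ ⟨1, by omega⟩ 1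
        - Matrix.single ⟨1, by omega⟩ ⟨(α : ℕ) + 2, by have := α.isLt; omega⟩ 1)
    (hpmat : ∀ α : Fin (n - 1), pmat α
      = Matrix.single ⟨(α : ℕ) + 2, by have := α.isLt; omega⟩ ⟨0, by omega⟩ 1
        - Matrix.single ⟨0, by omega⟩ ⟨(α : ℕ) + 2, by have := α.isLt; omega⟩ 1)
    (emat : Fin (n - 1) → Fin (n - 1) → Matrix (Fin (n + 1)) (Fin (n + 1)) ℝ)
    (hemat : ∀ α β : Fin (n - 1), emat α β
      = Matrix.single ⟨(α : ℕ) + 2, by have := α.isLt; omega⟩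
          ⟨(β : ℕ) + 2, by have := β.isLt; omega⟩ 1)
    (uu : Fin (n - 1) → ℝ → ℝ)
    (huu : ∀ α, ContDiff ℝ ∞ (uu α))
    (U : ℝ → Matrix (Fin (n + 1)) (Fin (n + 1)) ℝ)
    (hU : ∀ s : ℝ, U s = ∑ α, uu α s • kmat α)
    (Q2 : ℝ → Matrix (Fin (n + 1)) (Fin (n + 1)) ℝ)
    (hQ2 : ∀ s : ℝ, Q2 s
      = -((∑ α, uu α s ^ 2) / 2) • a - ∑ α, deriv (uu α) s • pmat α)
    (Q3 : ℝ → Matrix (Fin (n + 1)) (Fin (n + 1)) ℝ)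
    (hQ3 : ∀ s : ℝ, Q3 s
      = -(∑ α, (deriv (deriv (uu α)) s + ((∑ β, uu β s ^ 2) / 2) * uu α s) • kmat α)
        + ∑ α, ∑ β,
            (uu β s * deriv (uu α) s - uu α s * deriv (uu β) s) • emat α β) :
    ∀ s : ℝ,
      deriv Q2 s + (U s * Q2 s - Q2 s * U s) = Q3 s * a - a * Q3 s := by
  intro s
  -- useful index inequalities
  have ne10 : (⟨1, by omega⟩ : Fin (n + 1)) ≠ ⟨0, by omega⟩ := by simp only [ne_eq, Fin.mk.injEq]; omega
  have ne01 : (⟨0, by omega⟩ : Fin (n + 1)) ≠ ⟨1, by omega⟩ := by simp only [ne_eq, Fin.mk.injEq]; omega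
  have nea1 : ∀ α : Fin (n - 1),
      (⟨(α : ℕ) + 2, by have := α.isLt; omega⟩ : Fin (n + 1)) ≠ ⟨1, by omega⟩ :=
    fun α => by simp only [ne_eq, Fin.mk.injEq]; omega
  have nea0 : ∀ α : Fin (n - 1),
      (⟨(α : ℕ) + 2, by have := α.isLt; omega⟩ : Fin (n + 1)) ≠ ⟨0, by omega⟩ :=
    fun α => by simp only [ne_eq, Fin.mk.injEq]; omega
  have ne1a : ∀ α : Fin (n - 1),
      (⟨1, by omega⟩ : Fin (n + 1)) ≠ ⟨(α : ℕ) + 2, by have := α.isLt; omega⟩ :=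
    fun α => by simp only [ne_eq, Fin.mk.injEq]; omega
  have ne0a : ∀ α : Fin (n - 1),
      (⟨0, by omega⟩ : Fin (n + 1)) ≠ ⟨(α : ℕ) + 2, by have := α.isLt; omega⟩ :=
    fun α => by simp only [ne_eq, Fin.mk.injEq]; omega
  have ne10' : (⟨1, by omega⟩ : Fin (n + 1)) ≠ 0 := Fin.ne_of_val_ne (by simp)
  have ne01' : (0 : Fin (n + 1)) ≠ ⟨1, by omega⟩ := Fin.ne_of_val_ne (by simp)
  have nea0' : ∀ α : Fin (n - 1),
      (⟨(α : ℕ) + 2, by have := α.isLt; omega⟩ : Fin (n + 1)) ≠ 0 :=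
    fun α => Fin.ne_of_val_ne (by simp)
  have ne0a' : ∀ α : Fin (n - 1),
      (0 : Fin (n + 1)) ≠ ⟨(α : ℕ) + 2, by have := α.isLt; omega⟩ :=
    fun α => Fin.ne_of_val_ne (by simp)
  -- commutator relations
  have hkaC : ∀ α : Fin (n - 1), kmat α * a - a * kmat α = pmat α := by
    intro α
    rw [hkmat, ha, hpmat, sub_mul, sub_mul, mul_sub, mul_sub, mul_sub, mul_sub,
      Matrix.single_mul_single_same, Matrix.single_mul_single_same,
      Matrix.single_mul_single_of_ne (h := ne10),
      Matrix.single_mul_single_of_ne (h := nea1 α),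
      Matrix.single_mul_single_of_ne (h := nea0 α),
      Matrix.single_mul_single_of_ne (h := ne0a α),
      Matrix.single_mul_single_of_ne (h := ne01),
      Matrix.single_mul_single_of_ne (h := ne1a α)]
    simp
  have heaC : ∀ α β : Fin (n - 1), emat α β * a - a * emat α β = 0 := by
    intro α β
    rw [hemat, ha, mul_sub, sub_mul,
      Matrix.single_mul_single_of_ne (h := nea1 β),
      Matrix.single_mul_single_of_ne (h := nea0 β),
      Matrix.single_mul_single_of_ne (h := ne0a α),
      Matrix.single_mul_single_of_ne (h := ne1a α)]
    simp
  have hkpC : ∀ α β : Fin (n - 1),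
      kmat α * pmat β - pmat β * kmat α = if α = β then -a else 0 := by
    intro α β
    by_cases h : α = β
    · subst h
      rw [hkmat, hpmat, ha, if_pos rfl, sub_mul, sub_mul, mul_sub, mul_sub, mul_sub, mul_sub,
        Matrix.single_mul_single_same, Matrix.single_mul_single_same,
        Matrix.single_mul_single_of_ne (h := ne1a α),
        Matrix.single_mul_single_of_ne (h := ne10),
        Matrix.single_mul_single_of_ne (h := nea0 α),
        Matrix.single_mul_single_of_ne (h := ne0a α),
        Matrix.single_mul_single_of_ne (h := ne01),
        Matrix.single_mul_single_of_ne (h := nea1 α)]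
      simp
      abel
    · have hab : (⟨(α : ℕ) + 2, by have := α.isLt; omega⟩ : Fin (n + 1))
          ≠ ⟨(β : ℕ) + 2, by have := β.isLt; omega⟩ := by
        have := Fin.val_ne_of_ne h
        simp only [ne_eq, Fin.mk.injEq]; omega
      rw [hkmat, hpmat, if_neg h, sub_mul, sub_mul, mul_sub, mul_sub, mul_sub, mul_sub,
        Matrix.single_mul_single_of_ne (h := ne1a β),
        Matrix.single_mul_single_of_ne (h := ne10),
        Matrix.single_mul_single_of_ne (h := hab),
        Matrix.single_mul_single_of_ne (h := nea0 α),
        Matrix.single_mul_single_of_ne (h := ne0a α),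
        Matrix.single_mul_single_of_ne (h := ne01),
        Matrix.single_mul_single_of_ne (h := hab.symm),
        Matrix.single_mul_single_of_ne (h := nea1 β)]
      simp
  -- differentiability facts
  have hd1 : ∀ α : Fin (n - 1), Differentiable ℝ (uu α) :=
    fun α => (contDiff_infty_iff_deriv.mp (huu α)).1
  have hd2 : ∀ α : Fin (n - 1), Differentiable ℝ (deriv (uu α)) :=
    fun α => (contDiff_infty_iff_deriv.mp (contDiff_infty_iff_deriv.mp (huu α)).2).1
  -- derivative of Q2
  have hQd : HasDerivAt Q2
      (-((∑ α, 2 * uu α s * deriv (uu α) s) / 2) • a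
        - ∑ α, deriv (deriv (uu α)) s • pmat α) s := by
    have hfun : Q2 = fun t => -((∑ α, uu α t ^ 2) / 2) • a - ∑ α, deriv (uu α) t • pmat α :=
      funext hQ2
    rw [hfun]
    apply HasDerivAt.sub
    · have h1 : HasDerivAt (fun t => (∑ α, uu α t ^ 2))
          (∑ α, 2 * uu α s * deriv (uu α) s) s := by
        apply HasDerivAt.fun_sum
        intro α _
        have h := ((hd1 α s).hasDerivAt).fun_pow 2
        refine h.congr_deriv ?_
        push_cast
        ring
      exact ((h1.div_const 2).neg).smul_const a
    · apply HasDerivAt.fun_sum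
      intro α _
      exact ((hd2 α s).hasDerivAt).smul_const (pmat α)
  erw [hQd.deriv]
  -- the commutator [U, Q2]
  have h1 : (∑ α, uu α s • kmat α) * a - a * (∑ α, uu α s • kmat α)
      = ∑ α, uu α s • pmat α := by
    rw [Finset.sum_mul, Finset.mul_sum, ← Finset.sum_sub_distrib]
    exact Finset.sum_congr rfl fun α _ => by
      rw [smul_mul_assoc, mul_smul_comm, ← smul_sub, hkaC]
  have h2 : (∑ α, uu α s • kmat α) * (∑ β, deriv (uu β) s • pmat β)
      - (∑ β, deriv (uu β) s • pmat β) * (∑ α, uu α s • kmat α)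
      = -(∑ α, uu α s * deriv (uu α) s) • a := by
    rw [Finset.sum_mul, Finset.mul_sum, ← Finset.sum_sub_distrib]
    have key : ∀ α : Fin (n - 1),
        uu α s • kmat α * (∑ β, deriv (uu β) s • pmat β)
          - (∑ β, deriv (uu β) s • pmat β) * (uu α s • kmat α)
        = (uu α s * deriv (uu α) s) • (-a) := by
      intro α
      rw [Finset.mul_sum, Finset.sum_mul, ← Finset.sum_sub_distrib]
      have key2 : ∀ β : Fin (n - 1),
          (uu α s • kmat α) * (deriv (uu β) s • pmat β)
            - (deriv (uu β) s • pmat β) * (uu α s • kmat α)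
          = if α = β then (uu α s * deriv (uu β) s) • (-a) else 0 := by
        intro β
        rw [smul_mul_assoc, mul_smul_comm, smul_mul_assoc, mul_smul_comm,
          smul_comm (deriv (uu β) s) (uu α s), ← smul_sub, ← smul_sub, smul_smul, hkpC]
        split <;> simp
      rw [Finset.sum_congr rfl fun β _ => key2 β]
      simp
    rw [Finset.sum_congr rfl fun α _ => key α]
    rw [← Finset.sum_smul]
    simp
  have hcomm : U s * Q2 s - Q2 s * U s
      = -((∑ α, uu α s ^ 2) / 2) • (∑ α, uu α s • pmat α)
        + (∑ α, uu α s * deriv (uu α) s) • a := by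
    rw [hU s, hQ2 s]
    have expand : (∑ α, uu α s • kmat α)
          * (-((∑ α, uu α s ^ 2) / 2) • a - ∑ β, deriv (uu β) s • pmat β)
        - (-((∑ α, uu α s ^ 2) / 2) • a - ∑ β, deriv (uu β) s • pmat β)
          * (∑ α, uu α s • kmat α)
        = -((∑ α, uu α s ^ 2) / 2)
            • ((∑ α, uu α s • kmat α) * a - a * (∑ α, uu α s • kmat α))
          - ((∑ α, uu α s • kmat α) * (∑ β, deriv (uu β) s • pmat β)
            - (∑ β, deriv (uu β) s • pmat β) * (∑ α, uu α s • kmat α)) := by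
      rw [mul_sub, sub_mul, mul_smul_comm, smul_mul_assoc, smul_sub]
      abel
    rw [expand, h1, h2]
    simp
  rw [hcomm]
  -- the right-hand side
  have hRHS : Q3 s * a - a * Q3 s
      = -(∑ α, (deriv (deriv (uu α)) s + ((∑ β, uu β s ^ 2) / 2) * uu α s) • pmat α) := by
    rw [hQ3 s]
    have hG : (∑ α, (deriv (deriv (uu α)) s + ((∑ β, uu β s ^ 2) / 2) * uu α s) • kmat α) * a
        - a * (∑ α, (deriv (deriv (uu α)) s + ((∑ β, uu β s ^ 2) / 2) * uu α s) • kmat α)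
        = ∑ α, (deriv (deriv (uu α)) s + ((∑ β, uu β s ^ 2) / 2) * uu α s) • pmat α := by
      rw [Finset.sum_mul, Finset.mul_sum, ← Finset.sum_sub_distrib]
      exact Finset.sum_congr rfl fun α _ => by
        rw [smul_mul_assoc, mul_smul_comm, ← smul_sub, hkaC]
    have hE : (∑ α, ∑ β, (uu β s * deriv (uu α) s - uu α s * deriv (uu β) s) • emat α β) * a
        - a * (∑ α, ∑ β, (uu β s * deriv (uu α) s - uu α s * deriv (uu β) s) • emat α β)
        = 0 := by
      rw [Finset.sum_mul, Finset.mul_sum, ← Finset.sum_sub_distrib]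
      apply Finset.sum_eq_zero
      intro α _
      rw [Finset.sum_mul, Finset.mul_sum, ← Finset.sum_sub_distrib]
      apply Finset.sum_eq_zero
      intro β _
      rw [smul_mul_assoc, mul_smul_comm, ← smul_sub, heaC]
      simp
    have expand : (-(∑ α, (deriv (deriv (uu α)) s + ((∑ β, uu β s ^ 2) / 2) * uu α s) • kmat α)
          + ∑ α, ∑ β, (uu β s * deriv (uu α) s - uu α s * deriv (uu β) s) • emat α β) * a
        - a * (-(∑ α, (deriv (deriv (uu α)) s + ((∑ β, uu β s ^ 2) / 2) * uu α s) • kmat α)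
          + ∑ α, ∑ β, (uu β s * deriv (uu α) s - uu α s * deriv (uu β) s) • emat α β)
        = -((∑ α, (deriv (deriv (uu α)) s + ((∑ β, uu β s ^ 2) / 2) * uu α s) • kmat α) * a
            - a * (∑ α, (deriv (deriv (uu α)) s + ((∑ β, uu β s ^ 2) / 2) * uu α s) • kmat α))
          + ((∑ α, ∑ β, (uu β s * deriv (uu α) s - uu α s * deriv (uu β) s) • emat α β) * a
            - a * (∑ α, ∑ β, (uu β s * deriv (uu α) s - uu α s * deriv (uu β) s) • emat α β)) := by
      rw [add_mul, mul_add, neg_mul, mul_neg]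
      abel
    rw [expand, hG, hE]
    simp
  rw [hRHS]
  -- final scalar bookkeeping
  have hsc : (∑ α, 2 * uu α s * deriv (uu α) s) / 2 = ∑ α, uu α s * deriv (uu α) s := by
    rw [Finset.sum_div]
    exact Finset.sum_congr rfl fun α _ => by ring
  rw [hsc]
  simp only [add_smul, Finset.sum_add_distrib, Finset.smul_sum, smul_smul, neg_smul, mul_comm,
    smul_eq_mul]
  have hflip : ∑ x : Fin (n - 1), (uu x s * -((∑ α, uu α s ^ 2) / 2)) • pmat x
      = -∑ x : Fin (n - 1), (uu x s * ((∑ α, uu α s ^ 2) / 2)) • pmat x := by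
    rw [← Finset.sum_neg_distrib]
    exact Finset.sum_congr rfl fun x _ => by rw [mul_neg, neg_smul]
  rw [hflip]
  abel
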